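/- Let s(x) = Σ_{n ≥ 0} s_n x^n be the formal power series whose n-th coefficient s_n is the number of little Schröder paths of length 2n. Then s(x) satisfies the algebraic equation 2x·s(x)² − (1+x)·s(x) + 1 = 0. -/

import Mathlib

/-! Decompose a nonempty path at its first return to the axis. A big Schröder path is empty,
`H t`, or `U q D r` with `q`, `r` big; a little one is empty or `U q D r` with `q` big and `r`
little (it cannot start with `H`). Counting by semilength, the big generating function satisfies
`B = 1 + x B + x B²` and the little one `s = 1 + x B s`; eliminating `B` gives the equation. -/

/-- A step of a Schröder path: upstep, downstep, or a *double* horizontal step. -/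
inductive SchStep : Type
  | up : SchStep
  | down : SchStep
  | horiz : SchStep
deriving DecidableEq

/-- The number of unit steps a step occupies: `horiz` is a double horizontal step. -/
def SchStep.len : SchStep → ℕ
  | .up => 1
  | .down => 1
  | .horiz => 2

/-- The change in height produced by a step. -/
def SchStep.rise : SchStep → ℤ
  | .up => 1
  | .down => -1
  | .horiz => 0

/-- The length of a path (a double horizontal step counts 2). -/
def pathLen (p : List SchStep) : ℕ := (p.map SchStep.len).sum

/-- The final height of a path started at height 0. -/
def pathHeight (p : List SchStep) : ℤ := (p.map SchStep.rise).sum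

/-- A big Schröder path: ends at height 0 and never goes below the x-axis. -/
def IsBigSchroeder (p : List SchStep) : Prop :=
  pathHeight p = 0 ∧ ∀ q : List SchStep, q <+: p → 0 ≤ pathHeight q

/-- A little Schröder path: a big Schröder path with no double horizontal step at
height 0. -/
def IsLittleSchroeder (p : List SchStep) : Prop :=
  IsBigSchroeder p ∧ ∀ q r : List SchStep, p = q ++ SchStep.horiz :: r → pathHeight q ≠ 0

open PowerSeries in
/-- The generating function `s(x) = ∑ sₙ xⁿ` of the little Schröder numbers. -/
noncomputable def littleSchGF : PowerSeries ℚ :=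
  PowerSeries.mk fun n =>
    (Nat.card {p : List SchStep // IsLittleSchroeder p ∧ pathLen p = 2 * n} : ℚ)

namespace List

variable {α : Type*}

theorem forall_prefix_cons {P : List α → Prop} {a : α} {t : List α} :
    (∀ u, u <+: a :: t → P u) ↔ P [] ∧ ∀ u, u <+: t → P (a :: u) := by
  simp only [prefix_cons_iff, or_imp, forall_and, forall_eq, forall_exists_index, and_imp]
  exact and_congr_right fun _ => ⟨fun h u hu => h _ u rfl hu, fun h _ u hu => hu ▸ h u⟩

theorem forall_prefix_append {P : List α → Prop} {s t : List α} :
    (∀ u, u <+: s ++ t → P u) ↔ (∀ u, u <+: s → P u) ∧ ∀ u, u <+: t → P (s ++ u) := by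
  induction s generalizing P with
  | nil => simpa using fun h => h [] (nil_prefix)
  | cons a s ih => simp [forall_prefix_cons, ih, and_assoc]

theorem forall_cons_eq_append_cons {P : List α → Prop} {x y : α} {t : List α} :
    (∀ a b, y :: t = a ++ x :: b → P a) ↔
      (y = x → P []) ∧ ∀ a b, t = a ++ x :: b → P (y :: a) := by
  simp only [cons_eq_append_iff, or_imp, forall_and, cons.injEq, and_imp, forall_exists_index]
  constructor
  · rintro ⟨h₁, h₂⟩
    exact ⟨fun h => h₁ _ t rfl h.symm rfl, fun a b h => h₂ _ b a rfl h⟩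
  · rintro ⟨h₁, h₂⟩
    exact ⟨fun a _ ha h _ => ha ▸ h₁ h.symm, fun _ b a' ha h => ha ▸ h₂ a' b h⟩

theorem forall_append_eq_append_cons {P : List α → Prop} {x : α} {s t : List α} :
    (∀ a b, s ++ t = a ++ x :: b → P a) ↔
      (∀ a b, s = a ++ x :: b → P a) ∧ ∀ a b, t = a ++ x :: b → P (s ++ a) := by
  induction s generalizing P with
  | nil => simp
  | cons y s ih => simp [forall_cons_eq_append_cons, ih, and_assoc]

end List

instance : Fintype SchStep :=
  ⟨{.up, .down, .horiz}, fun x => by cases x <;> simp⟩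

/-- For a path returning to height `0` the sum of these weights is half its length. -/
def SchStep.semilen : SchStep → ℕ
  | .up => 1
  | .down => 0
  | .horiz => 1

def pathSemilen (p : List SchStep) : ℕ := (p.map SchStep.semilen).sum

section PathStatistics

variable (a : SchStep) (p q : List SchStep)

@[simp] lemma pathHeight_nil : pathHeight [] = 0 := rfl

@[simp] lemma pathHeight_cons : pathHeight (a :: p) = a.rise + pathHeight p := by
  simp [pathHeight]

@[simp] lemma pathHeight_append : pathHeight (p ++ q) = pathHeight p + pathHeight q := by
  simp [pathHeight]

@[simp] lemma pathSemilen_nil : pathSemilen [] = 0 := rfl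

@[simp] lemma pathSemilen_cons : pathSemilen (a :: p) = a.semilen + pathSemilen p := by
  simp [pathSemilen]

@[simp] lemma pathSemilen_append : pathSemilen (p ++ q) = pathSemilen p + pathSemilen q := by
  simp [pathSemilen]

lemma length_le_pathLen : p.length ≤ pathLen p := by
  induction p with
  | nil => simp
  | cons a p ih => cases a <;> simp [pathLen, SchStep.len] at ih ⊢ <;> omega

lemma pathLen_add_pathHeight : (pathLen p : ℤ) + pathHeight p = 2 * pathSemilen p := by
  induction p with
  | nil => simp [pathLen]
  | cons a p ih =>
    cases a <;> simp [pathLen, SchStep.len, SchStep.rise, SchStep.semilen] at ih ⊢ <;> omega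

end PathStatistics

lemma IsBigSchroeder.pathLen_eq {p : List SchStep} (hp : IsBigSchroeder p) :
    pathLen p = 2 * pathSemilen p := by
  have := pathLen_add_pathHeight p
  rw [hp.1] at this
  omega

lemma isBigSchroeder_nil : IsBigSchroeder [] :=
  ⟨rfl, by simp⟩

lemma not_isBigSchroeder_down_cons (t : List SchStep) : ¬IsBigSchroeder (.down :: t) :=
  fun h => by simpa [SchStep.rise] using h.2 [.down] (by simp)

lemma isBigSchroeder_horiz_cons_iff {t : List SchStep} :
    IsBigSchroeder (.horiz :: t) ↔ IsBigSchroeder t := by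
  simp [IsBigSchroeder, List.forall_prefix_cons, SchStep.rise]

lemma isBigSchroeder_up_cons_append_down_iff {q r : List SchStep} (hq : IsBigSchroeder q) :
    IsBigSchroeder (.up :: (q ++ .down :: r)) ↔ IsBigSchroeder r := by
  have hq' : ∀ u, u <+: q → 0 ≤ 1 + pathHeight u := fun u hu => by linarith [hq.2 u hu]
  simp +contextual [IsBigSchroeder, List.forall_prefix_cons, List.forall_prefix_append,
    SchStep.rise, hq.1, hq']

lemma exists_eq_append_down_of_prefix_neg {t : List SchStep}
    (h : ∃ u, u <+: t ∧ pathHeight u < 0) :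
    ∃ q r, t = q ++ .down :: r ∧ IsBigSchroeder q := by
  induction t using List.reverseRecOn with
  | nil => simp at h
  | append_singleton t a ih =>
    by_cases ht : ∃ u, u <+: t ∧ pathHeight u < 0
    · obtain ⟨q, r, rfl, hq⟩ := ih ht
      exact ⟨q, r ++ [a], by simp, hq⟩
    · simp only [not_exists, not_and, not_lt] at ht
      obtain ⟨u, hu, hneg⟩ := h
      rcases List.prefix_concat_iff.1 hu with rfl | hu
      · have := ht t (List.prefix_refl t)
        cases a with
        | down => exact ⟨t, [], rfl, by simp [SchStep.rise] at hneg; omega, ht⟩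
        | up | horiz => simp [SchStep.rise] at hneg; omega
      · exact absurd hneg (ht u hu).not_gt

lemma IsBigSchroeder.exists_of_up_cons {t : List SchStep}
    (h : IsBigSchroeder (.up :: t)) :
    ∃ q r, t = q ++ .down :: r ∧ IsBigSchroeder q ∧ IsBigSchroeder r := by
  have hneg : pathHeight t < 0 := by
    have := h.1
    simp [SchStep.rise] at this
    omega
  obtain ⟨q, r, rfl, hq⟩ := exists_eq_append_down_of_prefix_neg ⟨t, List.prefix_refl t, hneg⟩
  exact ⟨q, r, rfl, hq, (isBigSchroeder_up_cons_append_down_iff hq).1 h⟩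

lemma eq_of_prefix_of_append_down_eq {q q' r r' : List SchStep} (hq : pathHeight q = 0)
    (hq' : IsBigSchroeder q') (hpre : q <+: q') (h : q ++ .down :: r = q' ++ .down :: r') :
    q = q' := by
  obtain ⟨c, rfl⟩ := hpre
  rcases c with _ | ⟨d, c⟩
  · simp
  · rw [List.append_assoc, List.append_cancel_left_eq, List.cons_append, List.cons.injEq] at h
    obtain ⟨rfl, -⟩ := h
    have := hq'.2 (q ++ [.down]) (by simp)
    simp [hq, SchStep.rise] at this

lemma IsBigSchroeder.append_down_inj {q q' r r' : List SchStep} (hq : IsBigSchroeder q)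
    (hq' : IsBigSchroeder q') (h : q ++ .down :: r = q' ++ .down :: r') :
    q = q' ∧ r = r' := by
  obtain rfl : q = q' := by
    rcases List.prefix_or_prefix_of_prefix (h ▸ List.prefix_append q _)
      (List.prefix_append q' _) with hp | hp
    · exact eq_of_prefix_of_append_down_eq hq.1 hq' hp h
    · exact (eq_of_prefix_of_append_down_eq hq'.1 hq hp h.symm).symm
  exact ⟨rfl, by simpa using h⟩

lemma not_isLittleSchroeder_horiz_cons (t : List SchStep) :
    ¬IsLittleSchroeder (.horiz :: t) :=
  fun h => h.2 [] t rfl rfl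

lemma isLittleSchroeder_up_cons_append_down_iff {q r : List SchStep} (hq : IsBigSchroeder q) :
    IsLittleSchroeder (.up :: (q ++ .down :: r)) ↔ IsLittleSchroeder r := by
  have hq' : ∀ a b, q = a ++ .horiz :: b → 1 + pathHeight a ≠ 0 := by
    rintro a b rfl
    linarith [hq.2 a (List.prefix_append a _)]
  simp only [IsLittleSchroeder, isBigSchroeder_up_cons_append_down_iff hq,
    List.forall_cons_eq_append_cons, List.forall_append_eq_append_cons]
  simp +contextual [SchStep.rise, hq.1, hq']

open PowerSeries Finset

section WeightGF

variable {α β : Type*}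

noncomputable def weightGF (w : α → ℕ) : ℚ⟦X⟧ :=
  PowerSeries.mk fun n => Nat.card {a // w a = n}

@[simp] lemma coeff_weightGF (w : α → ℕ) (n : ℕ) :
    coeff n (weightGF w) = Nat.card {a // w a = n} :=
  coeff_mk _ _

lemma weightGF_comp_equiv (e : α ≃ β) (w : β → ℕ) : weightGF (w ∘ e) = weightGF w := by
  ext n
  rw [coeff_weightGF, coeff_weightGF]
  exact congrArg _ (Nat.card_congr (e.subtypeEquiv fun _ => Iff.rfl))

lemma weightGF_const_zero [Unique α] : weightGF (fun _ : α => 0) = 1 := by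
  ext (_ | n) <;> simp [coeff_one]

lemma weightGF_add_one (w : α → ℕ) : weightGF (fun a => w a + 1) = X * weightGF w := by
  ext (_ | n)
  · simp
  · simp [coeff_succ_X_mul]

instance finite_fiber_add_one (w : α → ℕ) [∀ n, Finite {a // w a = n}] (n : ℕ) :
    Finite {a // w a + 1 = n} :=
  .of_injective (fun a => (⟨a.1, by have := a.2; omega⟩ : {a // w a = n - 1}))
    fun _ _ h => Subtype.ext (Subtype.mk.inj h)

instance finite_fiber_sumElim (w : α → ℕ) (v : β → ℕ) [∀ n, Finite {a // w a = n}]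
    [∀ n, Finite {b // v b = n}] (n : ℕ) : Finite {x // Sum.elim w v x = n} :=
  .of_equiv ({a // w a = n} ⊕ {b // v b = n})
    (Equiv.subtypeSum (p := fun x => Sum.elim w v x = n)).symm

lemma weightGF_sumElim (w : α → ℕ) (v : β → ℕ) [∀ n, Finite {a // w a = n}]
    [∀ n, Finite {b // v b = n}] : weightGF (Sum.elim w v) = weightGF w + weightGF v := by
  ext n
  rw [coeff_weightGF, map_add, coeff_weightGF, coeff_weightGF, Nat.card_congr Equiv.subtypeSum]
  exact_mod_cast Nat.card_sum (α := {a // w a = n}) (β := {b // v b = n})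

def prodFiberEquiv (w : α → ℕ) (v : β → ℕ) (n : ℕ) :
    {x : α × β // w x.1 + v x.2 = n} ≃
      Σ ij : antidiagonal n, {a // w a = ij.1.1} × {b // v b = ij.1.2} where
  toFun x := ⟨⟨(w x.1.1, v x.1.2), mem_antidiagonal.2 x.2⟩, ⟨x.1.1, rfl⟩, ⟨x.1.2, rfl⟩⟩
  invFun y := ⟨(y.2.1, y.2.2), by rw [y.2.1.2, y.2.2.2]; exact mem_antidiagonal.1 y.1.2⟩
  left_inv _ := rfl
  right_inv := by
    rintro ⟨⟨⟨i, j⟩, hij⟩, ⟨a, ha⟩, ⟨b, hb⟩⟩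
    obtain rfl : w a = i := ha
    obtain rfl : v b = j := hb
    rfl

instance finite_fiber_prod (w : α → ℕ) (v : β → ℕ) [∀ n, Finite {a // w a = n}]
    [∀ n, Finite {b // v b = n}] (n : ℕ) : Finite {x : α × β // w x.1 + v x.2 = n} :=
  .of_equiv _ (prodFiberEquiv w v n).symm

lemma weightGF_prod (w : α → ℕ) (v : β → ℕ) [∀ n, Finite {a // w a = n}]
    [∀ n, Finite {b // v b = n}] :
    weightGF (fun x : α × β => w x.1 + v x.2) = weightGF w * weightGF v := by
  ext n
  rw [coeff_weightGF, Nat.card_congr (prodFiberEquiv w v n), Nat.card_sigma, coeff_mul,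
    ← sum_coe_sort (antidiagonal n)]
  simp [Nat.card_prod]

end WeightGF

abbrev BigSchroederPath := {p : List SchStep // IsBigSchroeder p}

abbrev LittleSchroederPath := {p : List SchStep // IsLittleSchroeder p}

def BigSchroederPath.semilen (p : BigSchroederPath) : ℕ := pathSemilen p.1

def LittleSchroederPath.semilen (p : LittleSchroederPath) : ℕ := pathSemilen p.1

lemma finite_pathSemilen_eq {P : List SchStep → Prop} (hP : ∀ p, P p → IsBigSchroeder p)
    (n : ℕ) : Finite {p : {p // P p} // pathSemilen p.1 = n} :=
  have : Finite {p : List SchStep // p.length ≤ 2 * n} := List.finite_length_le SchStep (2 * n)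
  .of_injective (fun p => (⟨p.1.1, by
      have := length_le_pathLen p.1.1
      rwa [(hP _ p.1.2).pathLen_eq, p.2] at this⟩ : {p : List SchStep // p.length ≤ 2 * n}))
    fun _ _ h => Subtype.ext (Subtype.ext (Subtype.mk.inj h))

instance (n : ℕ) : Finite {p : BigSchroederPath // p.semilen = n} :=
  finite_pathSemilen_eq (fun _ => id) n

instance (n : ℕ) : Finite {p : LittleSchroederPath // p.semilen = n} :=
  finite_pathSemilen_eq (fun _ => And.left) n

def bigSchroederOfSum : Unit ⊕ BigSchroederPath ⊕ BigSchroederPath × BigSchroederPath →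
    BigSchroederPath
  | .inl _ => ⟨[], isBigSchroeder_nil⟩
  | .inr (.inl t) => ⟨.horiz :: t.1, isBigSchroeder_horiz_cons_iff.2 t.2⟩
  | .inr (.inr (q, r)) => ⟨.up :: (q.1 ++ .down :: r.1),
      (isBigSchroeder_up_cons_append_down_iff q.2).2 r.2⟩

lemma bigSchroederOfSum_bijective : Function.Bijective bigSchroederOfSum := by
  refine ⟨?_, ?_⟩
  · rintro (_ | t | ⟨q, r⟩) (_ | t' | ⟨q', r'⟩) h <;>
      simp only [bigSchroederOfSum, Subtype.mk.injEq, List.cons.injEq, reduceCtorEq,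
        false_and] at h
    · rfl
    · rw [Subtype.ext h.2]
    · obtain ⟨hq, hr⟩ := q.2.append_down_inj q'.2 h.2
      rw [Subtype.ext hq, Subtype.ext hr]
  · rintro ⟨_ | ⟨_ | _ | _, t⟩, hp⟩
    · exact ⟨.inl (), rfl⟩
    · obtain ⟨q, r, rfl, hq, hr⟩ := hp.exists_of_up_cons
      exact ⟨.inr (.inr (⟨q, hq⟩, ⟨r, hr⟩)), rfl⟩
    · exact absurd hp (not_isBigSchroeder_down_cons t)
    · exact ⟨.inr (.inl ⟨t, isBigSchroeder_horiz_cons_iff.1 hp⟩), rfl⟩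

lemma semilen_bigSchroederOfSum
    (x : Unit ⊕ BigSchroederPath ⊕ BigSchroederPath × BigSchroederPath) :
    (bigSchroederOfSum x).semilen =
      Sum.elim (fun _ => 0) (Sum.elim (fun t => t.semilen + 1)
        (fun qr => qr.1.semilen + qr.2.semilen + 1)) x := by
  rcases x with _ | t | ⟨q, r⟩ <;>
    simp [bigSchroederOfSum, BigSchroederPath.semilen, SchStep.semilen, add_comm]

def littleSchroederOfSum : Unit ⊕ BigSchroederPath × LittleSchroederPath → LittleSchroederPath
  | .inl _ => ⟨[], isBigSchroeder_nil, by simp⟩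
  | .inr (q, r) => ⟨.up :: (q.1 ++ .down :: r.1),
      (isLittleSchroeder_up_cons_append_down_iff q.2).2 r.2⟩

lemma littleSchroederOfSum_bijective : Function.Bijective littleSchroederOfSum := by
  refine ⟨?_, ?_⟩
  · rintro (_ | ⟨q, r⟩) (_ | ⟨q', r'⟩) h <;>
      simp only [littleSchroederOfSum, Subtype.ext_iff, List.cons.injEq, reduceCtorEq] at h
    · rfl
    · obtain ⟨hq, hr⟩ := q.2.append_down_inj q'.2 h.2
      rw [Subtype.ext hq, Subtype.ext hr]
  · rintro ⟨_ | ⟨_ | _ | _, t⟩, hp⟩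
    · exact ⟨.inl (), rfl⟩
    · obtain ⟨q, r, rfl, hq, -⟩ := hp.1.exists_of_up_cons
      exact ⟨.inr (⟨q, hq⟩, ⟨r, (isLittleSchroeder_up_cons_append_down_iff hq).1 hp⟩), rfl⟩
    · exact absurd hp.1 (not_isBigSchroeder_down_cons t)
    · exact absurd hp (not_isLittleSchroeder_horiz_cons t)

lemma semilen_littleSchroederOfSum (x : Unit ⊕ BigSchroederPath × LittleSchroederPath) :
    (littleSchroederOfSum x).semilen =
      Sum.elim (fun _ => 0) (fun qr => qr.1.semilen + qr.2.semilen + 1) x := by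
  rcases x with _ | ⟨q, r⟩ <;>
    simp [littleSchroederOfSum, BigSchroederPath.semilen, LittleSchroederPath.semilen,
      SchStep.semilen, add_comm]

noncomputable def bigSchGF : ℚ⟦X⟧ :=
  weightGF BigSchroederPath.semilen

lemma bigSchGF_eq : bigSchGF = 1 + X * bigSchGF + X * bigSchGF ^ 2 := by
  calc bigSchGF
      = weightGF (BigSchroederPath.semilen ∘ Equiv.ofBijective _ bigSchroederOfSum_bijective) :=
        (weightGF_comp_equiv _ _).symm
    _ = weightGF (Sum.elim (fun _ : Unit => 0)
          (Sum.elim (fun t : BigSchroederPath => t.semilen + 1)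
            (fun qr : BigSchroederPath × BigSchroederPath => qr.1.semilen + qr.2.semilen + 1))) :=
        congrArg weightGF (funext semilen_bigSchroederOfSum)
    _ = 1 + X * bigSchGF + X * bigSchGF ^ 2 := by
      rw [weightGF_sumElim, weightGF_sumElim, weightGF_const_zero, weightGF_add_one,
        weightGF_add_one (fun qr : BigSchroederPath × BigSchroederPath => _ + _),
        weightGF_prod, bigSchGF]
      ring

lemma littleSchGF_eq_weightGF : littleSchGF = weightGF LittleSchroederPath.semilen := by
  ext n
  rw [littleSchGF, coeff_mk, coeff_weightGF]
  exact congrArg _ <| Nat.card_congr <| (Equiv.subtypeEquivRight fun p =>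
      and_congr_right fun hp => by rw [hp.1.pathLen_eq]; omega).trans
    (Equiv.subtypeSubtypeEquivSubtypeInter IsLittleSchroeder (pathSemilen · = n)).symm

lemma littleSchGF_eq : littleSchGF = 1 + X * bigSchGF * littleSchGF := by
  calc littleSchGF
      = weightGF (LittleSchroederPath.semilen ∘
          Equiv.ofBijective _ littleSchroederOfSum_bijective) := by
        rw [littleSchGF_eq_weightGF, weightGF_comp_equiv]
    _ = weightGF (Sum.elim (fun _ : Unit => 0)
          (fun qr : BigSchroederPath × LittleSchroederPath => qr.1.semilen + qr.2.semilen + 1)) :=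
        congrArg weightGF (funext semilen_littleSchroederOfSum)
    _ = 1 + X * bigSchGF * littleSchGF := by
      rw [weightGF_sumElim, weightGF_const_zero,
        weightGF_add_one (fun qr : BigSchroederPath × LittleSchroederPath => _ + _),
        weightGF_prod, bigSchGF, littleSchGF_eq_weightGF]
      ring

/-- The generating function of the little Schröder numbers satisfies the algebraic
equation `2 x s(x)² - (1 + x) s(x) + 1 = 0`. -/
theorem littleSchGF_algebraic_eq :
    2 * PowerSeries.X * littleSchGF ^ 2 - (1 + PowerSeries.X) * littleSchGF + 1 = 0 := by
  linear_combination (X * littleSchGF - 1 + X * bigSchGF * littleSchGF) * littleSchGF_eq -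
    X * littleSchGF ^ 2 * bigSchGF_eq
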